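/- arXiv:1606.05210 — 5 statements merged into one kernel-verified Lean document; each statement's English description precedes it below -/
import Mathlib

section
/- For every integer n ≥ 2, every real F > 0, every real a > 1 with a^(2^(-n)) > n·F, and every deterministic algorithm (φ, g) for weighted minimum asymmetric binary string guessing with known history reading at most b ≤ n−1 bits of advice, there exists a string x ∈ {0,1}^n containing at least one 1 such that the output y produced by the algorithm on x with the adversary weights w_1,…,w_n is either infeasible or has cost Σ_{i: y_i=1} w_i > F · OPT(x), where OPT(x) = Σ_{i: x_i=1} w_i. -/
/-!
The adversary runs a binary search on the exponent of `a`: the answer `x_j` moves the exponent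
by `±2^{-(j+2)}`, and all later moves together are smaller than that. Hence the exponent of
every weight at a `1` of `x` is at least `2^{-n}` below that of every weight at a `0`, so an
output answering `1` at a `0` of `x` pays more than `a^{2^{-n}} / n > F` times the optimum.

With its guesses all correct, the algorithm with advice `c` outputs the string it would produce
if each of its guesses were confirmed; with `b ≤ n - 1` bits there are at most
`2^{n-1} < 2^n - 1` such strings, so some nonzero `x` is guessed wrongly somewhere.
-/

/-- The adversary weights (0-indexed): `advW a x 0 = a^(1/2)` is the weight `w_1`, and the
weight `w_{j+2} = advW a x (j+1)` equals `w_{j+1} · a^(2^{-(j+2)})` if `x_{j+1} = 1`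
(i.e. `x j = true` 0-indexed) and `w_{j+1} · a^(-2^{-(j+2)})` otherwise. -/
noncomputable def advW (a : ℝ) (x : ℕ → Bool) : ℕ → ℝ
  | 0 => a ^ ((2:ℝ)⁻¹)
  | j + 1 => advW a x j * a ^ (if x j then ((2:ℝ) ^ (j + 2))⁻¹ else -((2:ℝ) ^ (j + 2))⁻¹)

/-- Extension of a string `x ∈ {0,1}^n` to an infinite string (by zeros). -/
def extStr {n : ℕ} (x : Fin n → Bool) : ℕ → Bool :=
  fun k => if h : k < n then x ⟨k, h⟩ else false

open Finset

noncomputable def advExp (x : ℕ → Bool) : ℕ → ℝ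
  | 0 => (2:ℝ)⁻¹
  | j + 1 => advExp x j + (if x j then ((2:ℝ) ^ (j + 2))⁻¹ else -((2:ℝ) ^ (j + 2))⁻¹)

section AdversaryWeights

variable {x : ℕ → Bool} {a : ℝ}

lemma advW_eq_rpow (ha : 0 < a) : ∀ j, advW a x j = a ^ advExp x j
  | 0 => rfl
  | j + 1 => by rw [advW, advExp, advW_eq_rpow ha j, Real.rpow_add ha]

lemma advW_pos (ha : 0 < a) (j : ℕ) : 0 < advW a x j := by
  rw [advW_eq_rpow ha]
  exact Real.rpow_pos_of_pos ha _

lemma advExp_succ_of_true {j : ℕ} (hx : x j = true) :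
    advExp x (j + 1) = advExp x j + ((2:ℝ) ^ (j + 2))⁻¹ := by
  simp [advExp, hx]

lemma advExp_succ_of_false {j : ℕ} (hx : x j = false) :
    advExp x (j + 1) = advExp x j - ((2:ℝ) ^ (j + 2))⁻¹ := by
  simp [advExp, hx, sub_eq_add_neg]

lemma abs_advExp_succ_sub (j : ℕ) : |advExp x (j + 1) - advExp x j| = ((2:ℝ) ^ (j + 2))⁻¹ := by
  cases hx : x j
  · rw [advExp_succ_of_false hx, sub_sub_cancel_left, abs_neg, abs_of_pos (by positivity)]
  · rw [advExp_succ_of_true hx, add_sub_cancel_left, abs_of_pos (by positivity)]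

lemma abs_advExp_sub_le {j m : ℕ} (hjm : j ≤ m) :
    |advExp x m - advExp x j| ≤ ((2:ℝ) ^ (j + 1))⁻¹ - ((2:ℝ) ^ (m + 1))⁻¹ := by
  induction m, hjm using Nat.le_induction with
  | base => simp
  | succ m _ ih =>
    have hstep := abs_advExp_succ_sub (x := x) m
    have hhalf : ((2:ℝ) ^ (m + 1))⁻¹ = 2 * ((2:ℝ) ^ (m + 2))⁻¹ := by
      rw [pow_succ (2:ℝ) (m + 1)]; field_simp
    calc |advExp x (m + 1) - advExp x j|
        ≤ |advExp x (m + 1) - advExp x m| + |advExp x m - advExp x j| := abs_sub_le _ _ _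
      _ ≤ ((2:ℝ) ^ (j + 1))⁻¹ - ((2:ℝ) ^ (m + 1 + 1))⁻¹ := by linarith

lemma advExp_add_le_of_true {j m : ℕ} (hjm : j < m) (hx : x j = true) :
    advExp x j + ((2:ℝ) ^ (m + 1))⁻¹ ≤ advExp x m := by
  have hstep := advExp_succ_of_true hx
  have htail := abs_le.mp (abs_advExp_sub_le (x := x) (show j + 1 ≤ m from hjm))
  linarith [htail.1]

lemma advExp_le_sub_of_false {j m : ℕ} (hjm : j < m) (hx : x j = false) :
    advExp x m ≤ advExp x j - ((2:ℝ) ^ (m + 1))⁻¹ := by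
  have hstep := advExp_succ_of_false hx
  have htail := abs_le.mp (abs_advExp_sub_le (x := x) (show j + 1 ≤ m from hjm))
  linarith [htail.2]

lemma advExp_add_le_of_false_of_true {n i m : ℕ} (hi : i < n) (hm : m < n)
    (hxi : x i = false) (hxm : x m = true) :
    advExp x m + ((2:ℝ) ^ n)⁻¹ ≤ advExp x i := by
  have hpow : ∀ k, k < n → ((2:ℝ) ^ n)⁻¹ ≤ ((2:ℝ) ^ (k + 1))⁻¹ := fun k hk => by
    gcongr
    · norm_num
    · omega
  rcases lt_trichotomy i m with him | rfl | hmi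
  · linarith [advExp_le_sub_of_false him hxi, hpow m hm]
  · simp [hxi] at hxm
  · linarith [advExp_add_le_of_true hmi hxm, hpow i hi]

lemma advW_mul_le_of_false_of_true (ha : 1 < a) {n i m : ℕ} (hi : i < n) (hm : m < n)
    (hxi : x i = false) (hxm : x m = true) :
    advW a x m * a ^ ((2:ℝ) ^ n)⁻¹ ≤ advW a x i := by
  have ha₀ : 0 < a := one_pos.trans ha
  rw [advW_eq_rpow ha₀, advW_eq_rpow ha₀, ← Real.rpow_add ha₀]
  exact Real.rpow_le_rpow_of_exponent_le ha.le (advExp_add_le_of_false_of_true hi hm hxi hxm)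

end AdversaryWeights

lemma mul_sum_ite_lt_sum_ite {ι : Type*} [Fintype ι] (w : ι → ℝ) (hw : ∀ m, 0 < w m)
    {x y : ι → Bool} {i : ι} {A F : ℝ} (hF : 0 ≤ F) (hA : Fintype.card ι * F < A)
    (hdom : ∀ m, x m = true → w m * A ≤ w i) (hyi : y i = true) :
    F * ∑ m, (if x m then w m else 0) < ∑ m, (if y m then w m else 0) := by
  have hopt : (∑ m, if x m then w m else 0) * A ≤ Fintype.card ι * w i := by
    rw [sum_mul, ← nsmul_eq_mul, ← card_univ]
    refine sum_le_card_nsmul _ _ _ fun m _ => ?_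
    cases hxm : x m
    · simpa using (hw i).le
    · simpa using hdom m hxm
  have hcost : w i ≤ ∑ m, if y m then w m else 0 := by
    simpa [hyi] using single_le_sum (f := fun m => if y m then w m else 0)
      (fun m _ => by split_ifs <;> simp [(hw m).le]) (mem_univ i)
  have hA₀ : 0 < A := lt_of_le_of_lt (by positivity) hA
  have hlt : F * (∑ m, if x m then w m else 0) * A < w i * A := by
    calc F * (∑ m, if x m then w m else 0) * A
        ≤ F * (Fintype.card ι * w i) := by rw [mul_assoc]; gcongr
      _ = Fintype.card ι * F * w i := by ring
      _ < A * w i := by gcongr; exact hw i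
      _ = w i * A := mul_comm _ _
  exact (lt_of_mul_lt_mul_right hlt hA₀.le).trans_le hcost

lemma extStr_apply {n : ℕ} (x : Fin n → Bool) (i : Fin n) : extStr x i = x i := by
  simp [extStr]

lemma mul_opt_lt_cost {n : ℕ} {F a : ℝ} (hF : 0 < F) (ha : 1 < a)
    (haF : (n : ℝ) * F < a ^ (((2:ℝ) ^ n)⁻¹)) {x y : Fin n → Bool} {i : Fin n}
    (hxi : x i = false) (hyi : y i = true) :
    F * ∑ m : Fin n, (if x m then advW a (extStr x) m.val else 0) <
      ∑ m : Fin n, (if y m then advW a (extStr x) m.val else 0) := by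
  refine mul_sum_ite_lt_sum_ite _ (fun m => advW_pos (one_pos.trans ha) _) hF.le
    (by simpa using haF) (fun m hxm => ?_) hyi
  exact advW_mul_le_of_false_of_true ha i.isLt m.isLt
    (by rw [extStr_apply, hxi]) (by rw [extStr_apply, hxm])

def confirmedPrefix (g : List Bool → Bool) : ℕ → List Bool
  | 0 => []
  | k + 1 => confirmedPrefix g k ++ [g (confirmedPrefix g k)]

def confirmedString (g : List Bool → Bool) (n : ℕ) : Fin n → Bool :=
  fun i => g (confirmedPrefix g i)

lemma take_ofFn_eq_confirmedPrefix {n : ℕ} {x : Fin n → Bool} {g : List Bool → Bool}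
    (hg : ∀ i : Fin n, g ((List.ofFn x).take i) = x i) :
    ∀ k ≤ n, (List.ofFn x).take k = confirmedPrefix g k
  | 0, _ => by simp [confirmedPrefix]
  | k + 1, hk => by
    have ih := take_ofFn_eq_confirmedPrefix hg k (by omega)
    rw [confirmedPrefix, ← ih, List.take_add_one, List.getElem?_ofFn, dif_pos (by omega),
      hg ⟨k, by omega⟩]
    rfl

lemma exists_wrong_guess {n : ℕ} {x : Fin n → Bool} {g : List Bool → Bool}
    (hx : x ≠ confirmedString g n) : ∃ i : Fin n, g ((List.ofFn x).take i) ≠ x i := by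
  by_contra! hg
  refine hx (funext fun i => ?_)
  rw [confirmedString, ← take_ofFn_eq_confirmedPrefix hg i i.isLt.le, hg]

lemma exists_ne_and_forall_ne {α : Type*} [Fintype α] [DecidableEq α] {k : ℕ} (z : Fin k → α)
    (x₀ : α) (hk : k + 1 < Fintype.card α) : ∃ x, x ≠ x₀ ∧ ∀ c, x ≠ z c := by
  have hcard : #(insert x₀ (univ.image z)) < #(univ : Finset α) :=
    calc #(insert x₀ (univ.image z)) ≤ k + 1 := by
          grw [card_insert_le, card_image_le, card_univ, Fintype.card_fin]
      _ < #univ := by rwa [card_univ]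
  obtain ⟨x, -, hx⟩ := exists_mem_notMem_of_card_lt_card hcard
  simp only [mem_insert, mem_image, mem_univ, true_and, not_or, not_exists] at hx
  exact ⟨x, hx.1, fun c h => hx.2 c h.symm⟩

lemma two_pow_add_one_lt_two_pow {n b : ℕ} (hn : 2 ≤ n) (hb : b ≤ n - 1) :
    2 ^ b + 1 < 2 ^ n := by
  have hle : 2 ^ b ≤ 2 ^ (n - 1) := Nat.pow_le_pow_right two_pos hb
  have htwo : 2 ≤ 2 ^ (n - 1) := Nat.le_self_pow (by omega) 2
  have hdouble : 2 ^ n = 2 * 2 ^ (n - 1) := by rw [← pow_succ', Nat.sub_add_cancel (by omega)]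
  omega

/-- For weighted minimum asymmetric binary string guessing with known history:
for every `n ≥ 2`, `F > 0`, `a > 1` with `a^(2^{-n}) > n·F`, and every deterministic
algorithm `(φ, g)` reading at most `b ≤ n - 1` advice bits, there is an input string `x`
containing a `1` on which the output `y`, given by
`y_i = g (φ x) (x_1 … x_{i-1})`, is either infeasible (some `i` has `x_i = 1` but `y_i = 0`)
or has cost `Σ_{i : y_i = 1} w_i > F · OPT(x)`, where `OPT(x) = Σ_{i : x_i = 1} w_i` and
`w_1, …, w_n` are the adversary weights determined by `a` and `x`. -/
theorem weighted_minASGk_advice_lower_bound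
    (n : ℕ) (hn : 2 ≤ n) (F a : ℝ) (hF : 0 < F) (ha : 1 < a)
    (haF : (n : ℝ) * F < a ^ (((2:ℝ) ^ n)⁻¹))
    (b : ℕ) (hb : b ≤ n - 1)
    (φ : (Fin n → Bool) → Fin (2 ^ b))
    (g : Fin (2 ^ b) → List Bool → Bool) :
    ∃ x : Fin n → Bool, (∃ i, x i = true) ∧
      ((∃ i : Fin n, x i = true ∧ g (φ x) ((List.ofFn x).take i.val) = false) ∨
        F * ∑ i : Fin n, (if x i then advW a (extStr x) i.val else 0) <
          ∑ i : Fin n, (if g (φ x) ((List.ofFn x).take i.val) then advW a (extStr x) i.val else 0)) := by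
  obtain ⟨x, hx₀, hx⟩ := exists_ne_and_forall_ne (fun c => confirmedString (g c) n)
    (fun _ => false) (by simpa using two_pow_add_one_lt_two_pow hn hb)
  obtain ⟨i, hi⟩ := exists_wrong_guess (hx (φ x))
  refine ⟨x, by simpa [funext_iff] using hx₀, ?_⟩
  cases hxi : x i
  · exact .inr (mul_opt_lt_cost hF ha haF hxi (by simpa [hxi] using hi))
  · exact .inl ⟨i, hxi, by simpa [hxi] using hi⟩
end

section
/- For every integer n ≥ 2, every b ≤ n−1, every advice function φ : {0,1}^n → {0, 1, …, 2^b − 1}, and every guessing function g mapping a pair (advice value, prefix x_1…x_{i-1}) to a guess in {0,1}, there exists a string x ∈ {0,1}^n containing at least one 1 and an index i ∈ {1,…,n} such that g(φ(x), x_1…x_{i-1}) ≠ x_i; that is, no deterministic binary string guessing algorithm with known history reading fewer than n bits of advice guesses every bit correctly on all strings containing at least one 1. -/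
lemma take_ofFn_congr {n : ℕ} (x y : Fin n → Bool) (i : ℕ)
    (h : ∀ j : Fin n, j.val < i → x j = y j) :
    (List.ofFn x).take i = (List.ofFn y).take i := by
  apply List.ext_getElem
  · simp
  intro k hk1 hk2
  simp only [List.getElem_take, List.getElem_ofFn]
  simp only [List.length_take, List.length_ofFn, lt_min_iff] at hk1
  exact h _ hk1.1

/-- Binary string guessing with known history: for every `n ≥ 2`, every number `b ≤ n - 1`
of advice bits, every advice function `φ : {0,1}^n → {0,…,2^b - 1}` and every guessing
function `g` mapping an advice value and the revealed prefix `x_1 … x_{i-1}` to a guess,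
there is a string `x` containing at least one `1` and a round `i` in which the algorithm
guesses wrongly, i.e. `g (φ x) (x_1 … x_{i-1}) ≠ x i`. -/
theorem binary_string_guessing_advice_lower_bound
    (n : ℕ) (hn : 2 ≤ n) (b : ℕ) (hb : b ≤ n - 1)
    (φ : (Fin n → Bool) → Fin (2 ^ b))
    (g : Fin (2 ^ b) → List Bool → Bool) :
    ∃ x : Fin n → Bool, (∃ i, x i = true) ∧
      ∃ i : Fin n, g (φ x) ((List.ofFn x).take i.val) ≠ x i := by
  by_contra h
  push_neg at h
  -- h : ∀ x, (∃ i, x i = true) → ∀ i, g (φ x) (take ...) = x i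
  set S : Finset (Fin n → Bool) := Finset.univ.filter (fun x => ∃ i, x i = true) with hS
  have hinj : Set.InjOn φ S := by
    intro x hx y hy hxy
    simp only [hS, Finset.coe_filter, Set.mem_setOf_eq] at hx hy
    have key : ∀ k : ℕ, ∀ i : Fin n, i.val < k → x i = y i := by
      intro k
      induction k with
      | zero => intro i hi; omega
      | succ k ih =>
        intro i hi
        rcases Nat.lt_or_ge i.val k with hk | hk
        · exact ih i hk
        · have hx' := h x hx.2 i
          have hy' := h y hy.2 i
          rw [← hx', ← hy', hxy,
            take_ofFn_congr x y i.val (fun j hj => ih j (by omega))]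
    funext i
    exact key (i.val + 1) i (Nat.lt_succ_self _)
  have hcard : S.card ≤ 2 ^ b := by
    calc S.card ≤ (Finset.univ : Finset (Fin (2 ^ b))).card :=
          Finset.card_le_card_of_injOn φ (fun _ _ => Finset.mem_univ _) hinj
      _ = 2 ^ b := by simp
  have hScard : S.card = 2 ^ n - 1 := by
    have : Sᶜ = {fun _ => false} := by
      ext x
      simp only [hS, Finset.mem_compl, Finset.mem_filter, Finset.mem_univ, true_and,
        Finset.mem_singleton, not_exists]
      constructor
      · intro hx; funext i
        simpa using hx i
      · intro hx i; rw [hx]; simp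
    have h2 : S.card + Sᶜ.card = 2 ^ n := by
      rw [Finset.card_add_card_compl]
      simp [Fintype.card_fun]
    rw [this, Finset.card_singleton] at h2
    omega
  have h1 : 2 ^ b ≤ 2 ^ (n - 1) := Nat.pow_le_pow_right (by norm_num) hb
  have h2 : 2 ^ (n - 1) * 2 = 2 ^ n := by
    rw [← pow_succ]
    congr 1
    omega
  have h3 : 2 ≤ 2 ^ (n - 1) := by
    calc 2 = 2 ^ 1 := rfl
      _ ≤ 2 ^ (n - 1) := Nat.pow_le_pow_right (by norm_num) (by omega)
  omega
end

section
/- With the adversary weights w_1, …, w_n defined from a real a > 1 and a string x ∈ {0,1}^n: for every index i ∈ {1,…,n}, a^(2^{-i}) ≤ w_i ≤ a^(1 − 2^{-i}); in particular 1 < w_i < a, so all weights lie in the interval (1, a). -/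
/-- With the adversary weights `w_1, …, w_n` defined from `a > 1` and `x ∈ {0,1}^n`:
for every index `i ∈ {1,…,n}`, `a^(2^{-i}) ≤ w_i ≤ a^(1 - 2^{-i})`; in particular
`1 < w_i < a`, so all weights lie in the interval `(1, a)`.
(Stated 0-indexed: `w_i = advW a x j` for `j = i - 1`, so `2^{-i} = 2^{-(j+1)}`.) -/
theorem advW_bounds
    (n : ℕ) (a : ℝ) (ha : 1 < a) (x : ℕ → Bool) (j : ℕ) (hj : j < n) :
    a ^ (((2:ℝ) ^ (j + 1))⁻¹) ≤ advW a x j ∧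
    advW a x j ≤ a ^ (1 - ((2:ℝ) ^ (j + 1))⁻¹) ∧
    1 < advW a x j ∧ advW a x j < a := by
  have h0 : (0:ℝ) < a := lt_trans one_pos ha
  have main : ∀ j : ℕ, a ^ (((2:ℝ) ^ (j + 1))⁻¹) ≤ advW a x j ∧
      advW a x j ≤ a ^ (1 - ((2:ℝ) ^ (j + 1))⁻¹) := by
    intro j
    induction j with
    | zero =>
      simp only [advW]
      norm_num
    | succ k ih =>
      obtain ⟨h1, h2⟩ := ih
      have hBpos : (0:ℝ) < ((2:ℝ) ^ (k + 2))⁻¹ := by positivity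
      have heq : ((2:ℝ) ^ (k + 1 + 1))⁻¹ = ((2:ℝ) ^ (k + 2))⁻¹ := by norm_num
      have hhalf : ((2:ℝ) ^ (k + 1))⁻¹ - ((2:ℝ) ^ (k + 2))⁻¹ = ((2:ℝ) ^ (k + 2))⁻¹ := by
        have h21 : (2:ℝ) ^ (k + 2) = 2 * (2:ℝ) ^ (k + 1) := by ring
        have h2pos : (0:ℝ) < (2:ℝ) ^ (k + 1) := by positivity
        rw [h21]
        field_simp
        ring
      have hle : a ^ (-(((2:ℝ) ^ (k + 2))⁻¹)) ≤
          a ^ (if x k then ((2:ℝ) ^ (k + 2))⁻¹ else -((2:ℝ) ^ (k + 2))⁻¹) := by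
        apply Real.rpow_le_rpow_left_iff ha |>.2
        split
        · linarith
        · exact le_refl _
      have hge : a ^ (if x k then ((2:ℝ) ^ (k + 2))⁻¹ else -((2:ℝ) ^ (k + 2))⁻¹) ≤
          a ^ (((2:ℝ) ^ (k + 2))⁻¹) := by
        apply Real.rpow_le_rpow_left_iff ha |>.2
        split
        · exact le_refl _
        · linarith
      constructor
      · show _ ≤ advW a x k * _
        calc a ^ (((2:ℝ) ^ (k + 1 + 1))⁻¹)
            = a ^ (((2:ℝ) ^ (k + 1))⁻¹) * a ^ (-(((2:ℝ) ^ (k + 2))⁻¹)) := by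
              rw [← Real.rpow_add h0]
              congr 1
              linarith [heq, hhalf]
          _ ≤ advW a x k * a ^ (if x k then ((2:ℝ) ^ (k + 2))⁻¹ else -((2:ℝ) ^ (k + 2))⁻¹) := by
              apply mul_le_mul h1 hle (le_of_lt (Real.rpow_pos_of_pos h0 _))
              exact le_trans (le_of_lt (Real.rpow_pos_of_pos h0 _)) h1
      · show advW a x k * _ ≤ _
        calc advW a x k * a ^ (if x k then ((2:ℝ) ^ (k + 2))⁻¹ else -((2:ℝ) ^ (k + 2))⁻¹)
            ≤ a ^ (1 - ((2:ℝ) ^ (k + 1))⁻¹) * a ^ (((2:ℝ) ^ (k + 2))⁻¹) := by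
              apply mul_le_mul h2 hge (le_of_lt (Real.rpow_pos_of_pos h0 _))
              exact le_of_lt (Real.rpow_pos_of_pos h0 _)
          _ = a ^ (1 - ((2:ℝ) ^ (k + 1 + 1))⁻¹) := by
              rw [← Real.rpow_add h0]
              congr 1
              linarith [heq, hhalf]
  obtain ⟨h1, h2⟩ := main j
  have hBpos : (0:ℝ) < ((2:ℝ) ^ (j + 1))⁻¹ := by positivity
  have hBlt : ((2:ℝ) ^ (j + 1))⁻¹ < 1 := by
    rw [inv_lt_one_iff₀]
    right
    exact one_lt_pow₀ (by norm_num) (by omega)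
  refine ⟨h1, h2, ?_, ?_⟩
  · calc (1:ℝ) = a ^ (0:ℝ) := (Real.rpow_zero a).symm
      _ < a ^ (((2:ℝ) ^ (j + 1))⁻¹) := (Real.rpow_lt_rpow_left_iff ha).2 hBpos
      _ ≤ advW a x j := h1
  · calc advW a x j ≤ a ^ (1 - ((2:ℝ) ^ (j + 1))⁻¹) := h2
      _ < a ^ (1:ℝ) := (Real.rpow_lt_rpow_left_iff ha).2 (by linarith)
      _ = a := Real.rpow_one a
end

section
/- Let n ≥ 1 and x ∈ {0,1}^n, let G(x) be the simple graph on vertices v_1, …, v_n in which v_i and v_j (i < j) are adjacent if and only if x_i = 1, and let V₁ = {v_i : x_i = 1}. Then V₁ \ {v_n} is a vertex cover of G(x) (every edge of G(x) has at least one endpoint in V₁ \ {v_n}), and every vertex cover of G(x) has cardinality at least |V₁ \ {v_n}|; that is, V₁ \ {v_n} is a minimum vertex cover of G(x). -/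
/-- For `x ∈ {0,1}^n` (`n ≥ 1`), let `G(x)` be the simple graph on vertices `v_1, …, v_n`
in which `v_i` and `v_j` (`i < j`) are adjacent iff `x_i = 1`, and let
`V₁ = {v_i : x_i = 1}`.  Then `V₁ \ {v_n}` is a vertex cover of `G(x)`, and every vertex
cover of `G(x)` has cardinality at least `|V₁ \ {v_n}|`; i.e. `V₁ \ {v_n}` is a minimum
vertex cover of `G(x)`. -/
theorem vertexCover_minASGk_reduction
    (n : ℕ) (hn : 1 ≤ n) (x : Fin n → Bool) :
    let G : SimpleGraph (Fin n) := SimpleGraph.fromRel (fun i j => i < j ∧ x i = true)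
    let V₁ : Finset (Fin n) := Finset.univ.filter (fun i => x i = true)
    let C₀ : Finset (Fin n) := V₁.erase ⟨n - 1, by omega⟩
    (∀ i j, G.Adj i j → i ∈ C₀ ∨ j ∈ C₀) ∧
    (∀ C : Finset (Fin n), (∀ i j, G.Adj i j → i ∈ C ∨ j ∈ C) → C₀.card ≤ C.card) := by
  intro G V₁ C₀
  haveI : NeZero n := ⟨by omega⟩
  have hmemC₀ : ∀ i : Fin n, i ∈ C₀ ↔ (i : ℕ) < n - 1 ∧ x i = true := by
    intro i
    simp only [C₀, V₁, Finset.mem_erase, Finset.mem_filter, Finset.mem_univ, true_and]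
    constructor
    · rintro ⟨hne, hx⟩
      refine ⟨?_, hx⟩
      have := i.isLt
      rcases Nat.lt_or_ge (i : ℕ) (n - 1) with h | h
      · exact h
      · exact absurd (Fin.ext (show (i : ℕ) = n - 1 by omega)) hne
    · rintro ⟨hlt, hx⟩
      refine ⟨?_, hx⟩
      intro h
      rw [h] at hlt
      simp at hlt
  have hadj : ∀ i j : Fin n, G.Adj i j ↔ i ≠ j ∧ ((i < j ∧ x i = true) ∨ (j < i ∧ x j = true)) := by
    intro i j
    simp [G, SimpleGraph.fromRel_adj]
  constructor
  · intro i j h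
    rw [hadj] at h
    obtain ⟨hne, h | h⟩ := h
    · left
      rw [hmemC₀]
      have := j.isLt
      exact ⟨by have := h.1; omega, h.2⟩
    · right
      rw [hmemC₀]
      have := i.isLt
      exact ⟨by have := h.1; omega, h.2⟩
  · intro C hC
    by_cases hsub : C₀ ⊆ C
    · exact Finset.card_le_card hsub
    · obtain ⟨a, ha⟩ := Finset.not_subset.mp hsub
      set S : Finset (Fin n) := C₀ \ C with hS
      have hSne : S.Nonempty := ⟨a, by simp [hS, ha.1, ha.2]⟩
      obtain ⟨i₀, hi₀S, hi₀min⟩ : ∃ i₀ ∈ S, ∀ i ∈ S, i₀ ≤ i :=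
        ⟨S.min' hSne, S.min'_mem hSne, fun i hi => S.min'_le i hi⟩
      have hi₀C₀ : i₀ ∈ C₀ := (Finset.mem_sdiff.mp hi₀S).1
      have hi₀C : i₀ ∉ C := (Finset.mem_sdiff.mp hi₀S).2
      have hi₀lt : (i₀ : ℕ) < n - 1 := ((hmemC₀ i₀).mp hi₀C₀).1
      have hxi₀ : x i₀ = true := ((hmemC₀ i₀).mp hi₀C₀).2
      have hone : ((1 : Fin n) : ℕ) = 1 := by
        have h1 : (1 : ℕ) % n = 1 := Nat.mod_eq_of_lt (by omega)
        simp [Fin.val_one', h1]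
      have hval : ∀ i : Fin n, (i : ℕ) < n - 1 → ((i + 1 : Fin n) : ℕ) = (i : ℕ) + 1 := by
        intro i hi
        rw [Fin.add_def, hone]
        exact Nat.mod_eq_of_lt (by omega)
      -- everything above i₀ is in C
      have h1 : ∀ j : Fin n, i₀ < j → j ∈ C := by
        intro j hj
        have hadj' : G.Adj i₀ j := by
          rw [hadj]
          exact ⟨Fin.ne_of_lt hj, Or.inl ⟨hj, hxi₀⟩⟩
        rcases hC i₀ j hadj' with h | h
        · exact absurd h hi₀C
        · exact h
      -- everything in C₀ below i₀ is in C
      have h2 : ∀ i : Fin n, i ∈ C₀ → i < i₀ → i ∈ C := by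
        intro i hi hlt
        by_contra hiC
        have hmem : i ∈ S := Finset.mem_sdiff.mpr ⟨hi, hiC⟩
        exact absurd hlt (not_lt.mpr (hi₀min i hmem))
      -- injection f : C₀ → C
      apply Finset.card_le_card_of_injOn (fun i => if i < i₀ then i else i + 1)
      · intro i hi
        by_cases h : i < i₀
        · simpa [h] using h2 i hi h
        · simp only [h, if_false]
          have hilt : (i : ℕ) < n - 1 := ((hmemC₀ i).mp hi).1
          apply h1
          have hle : (i₀ : ℕ) ≤ (i : ℕ) := Fin.le_def.mp (Fin.not_lt.mp h)
          rw [Fin.lt_def, hval i hilt]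
          omega
      · intro i hi j hj hfij
        simp only [Finset.mem_coe] at hi hj
        have hilt : (i : ℕ) < n - 1 := ((hmemC₀ i).mp hi).1
        have hjlt : (j : ℕ) < n - 1 := ((hmemC₀ j).mp hj).1
        simp only at hfij
        by_cases h : i < i₀ <;> by_cases h' : j < i₀ <;>
            simp only [h, h', if_true, if_false] at hfij
        · exact hfij
        · exfalso
          have hv := congrArg Fin.val hfij
          rw [hval j hjlt] at hv
          rw [Fin.lt_def] at h h'
          omega
        · exfalso
          have hv := congrArg Fin.val hfij
          rw [hval i hilt] at hv
          rw [Fin.lt_def] at h h'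
          omega
        · apply Fin.ext
          have hv := congrArg Fin.val hfij
          rw [hval i hilt, hval j hjlt] at hv
          omega
end

section
/- Let F > 1 be a real number and N ≥ 1, K ≥ 1 integers with K < N. For every advice assignment φ : {1,…,N} → {1,…,K} and every decision function g : {1,…,K} × ℕ → {accept, reject}, define for each input length m ∈ {1,…,N}: ALG(m) = F^t, where t is the least index t ≤ m with g(φ(m), t) = accept, and ALG(m) = 0 if no such t exists. Then there exists m ∈ {1,…,N} such that F · ALG(m) ≤ F^m; that is, on some input the algorithm's profit is at most OPT(m)/F, where OPT(m) = F^m. -/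
/-!
If every input `m` earned more than `F^(m-1)`, the algorithm would have to accept exactly
at round `m` on input `m`. By pigeonhole two lengths `a < b` share their advice; the
decision function then accepts at round `a` on input `b` as well, so input `b` earns at
most `F^a ≤ F^(b-1)`.
-/

open Classical in
noncomputable def singleSelectionProfit (F : ℝ) (g : ℕ → Bool) (m : ℕ) : ℝ :=
  if h : ∃ t, (1 ≤ t ∧ t ≤ m) ∧ g t = true then F ^ Nat.find h else 0

section

variable {F : ℝ} {g : ℕ → Bool} {m : ℕ}

theorem mul_singleSelectionProfit_le_of_accept_lt (hF : 1 ≤ F) {t : ℕ} (ht : 1 ≤ t)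
    (htm : t < m) (hg : g t = true) : F * singleSelectionProfit F g m ≤ F ^ m := by
  have h : ∃ t, (1 ≤ t ∧ t ≤ m) ∧ g t = true := ⟨t, ⟨ht, htm.le⟩, hg⟩
  rw [singleSelectionProfit, dif_pos h, ← pow_succ']
  exact pow_le_pow_right₀ hF ((Nat.find_min' h ⟨⟨ht, htm.le⟩, hg⟩).trans_lt htm)

theorem mul_singleSelectionProfit_le_of_reject (hF : 1 ≤ F) (hg : g m = false) :
    F * singleSelectionProfit F g m ≤ F ^ m := by
  by_cases h : ∃ t, (1 ≤ t ∧ t ≤ m) ∧ g t = true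
  · obtain ⟨⟨ht, htm⟩, hgt⟩ := Nat.find_spec h
    have hne : Nat.find h ≠ m := fun heq => by simp [heq, hg] at hgt
    exact mul_singleSelectionProfit_le_of_accept_lt hF ht (htm.lt_of_ne hne) hgt
  · rw [singleSelectionProfit, dif_neg h, mul_zero]
    positivity

end

open Classical in
theorem single_selection_advice_lower_bound_general
    (F : ℝ) (hF : 1 < F) (N K : ℕ) (hKN : K < N)
    (φ : ℕ → ℕ) (hφ : ∀ m ∈ Finset.Icc 1 N, φ m ∈ Finset.Icc 1 K)
    (g : ℕ → ℕ → Bool) :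
    ∃ m ∈ Finset.Icc 1 N,
      F * (if h : ∃ t, (1 ≤ t ∧ t ≤ m) ∧ g (φ m) t = true
            then F ^ (Nat.find h) else 0) ≤ F ^ m := by
  obtain ⟨a, ha, b, hb, hab, hφab⟩ :=
    Finset.exists_ne_map_eq_of_card_lt_of_maps_to (by simpa using hKN) hφ
  wlog hlt : a < b generalizing a b
  · exact this b hb a ha hab.symm hφab.symm (by omega)
  cases hga : g (φ a) a
  · exact ⟨a, ha, mul_singleSelectionProfit_le_of_reject hF.le hga⟩
  · exact ⟨b, hb, mul_singleSelectionProfit_le_of_accept_lt hF.le (Finset.mem_Icc.1 ha).1 hlt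
      (hφab ▸ hga)⟩

open Classical in
/-- Online single-selection maximization with weights `F, F², …`: for every real `F > 1`,
integers `N ≥ 1`, `K ≥ 1` with `K < N`, every advice assignment `φ : {1,…,N} → {1,…,K}`
and every decision function `g`, there is an input length `m ∈ {1,…,N}` on which the
algorithm's profit `ALG(m)` — equal to `F^t` for the least round `t ∈ {1,…,m}` with
`g (φ m) t = accept`, and `0` if no round is accepted — satisfies `F · ALG(m) ≤ F^m`,
i.e. the profit is at most `OPT(m)/F` where `OPT(m) = F^m`. -/
theorem single_selection_advice_lower_bound
    (F : ℝ) (hF : 1 < F) (N K : ℕ) (hN : 1 ≤ N) (hK : 1 ≤ K) (hKN : K < N)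
    (φ : ℕ → ℕ) (hφ : ∀ m ∈ Finset.Icc 1 N, φ m ∈ Finset.Icc 1 K)
    (g : ℕ → ℕ → Bool) :
    ∃ m ∈ Finset.Icc 1 N,
      F * (if h : ∃ t, (1 ≤ t ∧ t ≤ m) ∧ g (φ m) t = true
            then F ^ (Nat.find h) else 0) ≤ F ^ m :=
  single_selection_advice_lower_bound_general F hF N K hKN φ hφ g
end
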